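/- arXiv:1203.2461 — 5 statements merged into one kernel-verified Lean document; each statement's English description precedes it below -/
import Mathlib

section
/- Any group object G in the category of simplicial sets over a discrete (constant) simplicial set Y is such that the structure map G → Y is a Kan fibration. -/
open CategoryTheory SSet Simplicial

universe u

/-- A group object in the category of simplicial sets over the constant simplicial set on a
set `Y`: a simplicial set `G` with a projection `p : G ⟶ Y` (to the constant simplicial
set), a fiberwise multiplication (defined on pairs of simplices lying in the same fiber),
fiberwise units and fiberwise inverses, all compatible with the simplicial structure maps;
equivalently, each fiber `p⁻¹(y)` is a simplicial group. -/
structure SimplicialGroupOver (Y : Type u) where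
  G : SSet.{u}
  p : G ⟶ (Functor.const SimplexCategoryᵒᵖ).obj Y
  one : ∀ (m : SimplexCategoryᵒᵖ), Y → G.obj m
  mul : ∀ (m : SimplexCategoryᵒᵖ) (x y : G.obj m), p.app m x = p.app m y → G.obj m
  inv : ∀ (m : SimplexCategoryᵒᵖ), G.obj m → G.obj m
  p_one : ∀ m y, p.app m (one m y) = y
  p_mul : ∀ m x y h, p.app m (mul m x y h) = p.app m x
  p_inv : ∀ m x, p.app m (inv m x) = p.app m x
  one_mul : ∀ m x, mul m (one m (p.app m x)) x (p_one m _) = x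
  mul_one : ∀ m x, mul m x (one m (p.app m x)) (p_one m _).symm = x
  mul_assoc : ∀ m x y z (h₁ : p.app m x = p.app m y) (h₂ : p.app m y = p.app m z),
    mul m (mul m x y h₁) z ((p_mul m x y h₁).trans (h₁.trans h₂)) =
      mul m x (mul m y z h₂) (h₁.trans (p_mul m y z h₂).symm)
  inv_mul : ∀ m x, mul m (inv m x) x (p_inv m x) = one m (p.app m x)
  map_one : ∀ {m m'} (f : m ⟶ m') y, G.map f (one m y) = one m' y
  map_mul : ∀ {m m'} (f : m ⟶ m') x y (h : p.app m x = p.app m y)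
    (h' : p.app m' (G.map f x) = p.app m' (G.map f y)),
    G.map f (mul m x y h) = mul m' (G.map f x) (G.map f y) h'
  map_inv : ∀ {m m'} (f : m ⟶ m') x, G.map f (inv m x) = inv m' (G.map f x)

/-!
Since `Y` is discrete, the bottom map `Δ[n] ⟶ Y` of a lifting problem is constant at some `y`,
so the horn lands in the fibre `p⁻¹(y)`, which is a simplicial group, and it suffices to fill
horns there (Moore). Given compatible faces `x_j` (`j ≠ k`), start from `w = 1` and correct the
faces one at a time, first `0, …, k - 1` upwards, then the others from the top down to `k + 1`:
to fix face `r`, multiply `w` by a degeneracy `σ_c` (`r ∈ {c, c + 1}`) of the defect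
`(d_r w)⁻¹ x_r`. The simplicial identities and the compatibility of the `x_j` make the faces of
the defect that matter vanish, so the faces fixed earlier are not disturbed.
-/

namespace CategoryTheory.SimplicialObject

variable {X : SimplicialObject GrpCat.{u}} {n : ℕ}

lemma δ_σ_zero_apply (j : Fin 2) (u : X _⦋0⦌) : X.δ j (X.σ 0 u) = u := by
  obtain rfl | rfl : j = 0 ∨ j = 1 := by omega
  · rw [← comp_apply, X.δ_comp_σ_self' (j := 0) (i := 0) rfl, id_apply]
  · rw [← comp_apply, X.δ_comp_σ_succ' (j := 1) (i := 0) rfl, id_apply]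

lemma δ_σ_eq_one_of_lt {c : Fin (n + 2)} {a : Fin (n + 3)} (hac : a < c.castSucc)
    {u : X _⦋n + 1⦌} (hu : X.δ (a.castPred (Fin.ne_last_of_lt hac)) u = 1) :
    X.δ a (X.σ c u) = 1 := by
  obtain ⟨c, rfl⟩ := Fin.eq_succ_of_ne_zero (i := c) (by rintro rfl; simp at hac)
  obtain ⟨a, rfl⟩ := Fin.eq_castSucc_of_ne_last (Fin.ne_last_of_lt hac)
  have hac' : a ≤ c.castSucc := by simpa [Fin.le_def, Fin.lt_def] using Nat.le_of_lt_succ hac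
  rw [← comp_apply, X.δ_comp_σ_of_le hac', comp_apply]
  simpa using congrArg (X.σ c) hu

lemma δ_σ_eq_one_of_gt {c : Fin (n + 2)} {a : Fin (n + 3)} (hca : c.succ < a)
    {u : X _⦋n + 1⦌} (hu : X.δ (a.pred (Fin.ne_zero_of_lt hca)) u = 1) :
    X.δ a (X.σ c u) = 1 := by
  rw [← comp_apply, X.δ_comp_σ_of_gt' hca, comp_apply, hu, map_one]

variable {k : Fin (n + 3)} {x : ∀ j : Fin (n + 3), j ≠ k → X _⦋n + 1⦌}

/-- `horn.IsCompatible`, stated on simplices: the faces of a map `Λ[n + 2, k] ⟶ X`. -/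
def IsHornCompatible (x : ∀ j : Fin (n + 3), j ≠ k → X _⦋n + 1⦌) : Prop :=
  ∀ a b (ha : a ≠ k) (hb : b ≠ k) (hab : a < b),
    X.δ (b.pred (Fin.ne_zero_of_lt hab)) (x a ha) =
      X.δ (a.castPred (Fin.ne_last_of_lt hab)) (x b hb)

lemma δ_castPred_inv_δ_mul_eq_one (hx : IsHornCompatible x) {w : X _⦋n + 2⦌}
    {a r : Fin (n + 3)} (ha : a ≠ k) (hr : r ≠ k) (har : a < r) (hw : X.δ a w = x a ha) :
    X.δ (a.castPred (Fin.ne_last_of_lt har)) ((X.δ r w)⁻¹ * x r hr) = 1 := by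
  have hδδ : X.δ r ≫ X.δ (a.castPred (Fin.ne_last_of_lt har)) =
      X.δ a ≫ X.δ (r.pred (Fin.ne_zero_of_lt har)) := by
    simpa using X.δ_comp_δ' (i := a.castPred (Fin.ne_last_of_lt har)) (j := r) (by simpa using har)
  rw [map_mul, map_inv, inv_mul_eq_one, ← comp_apply, hδδ, comp_apply, hw, hx a r ha hr har]

lemma δ_pred_inv_δ_mul_eq_one (hx : IsHornCompatible x) {w : X _⦋n + 2⦌}
    {a r : Fin (n + 3)} (ha : a ≠ k) (hr : r ≠ k) (hra : r < a) (hw : X.δ a w = x a ha) :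
    X.δ (a.pred (Fin.ne_zero_of_lt hra)) ((X.δ r w)⁻¹ * x r hr) = 1 := by
  have hδδ : X.δ r ≫ X.δ (a.pred (Fin.ne_zero_of_lt hra)) =
      X.δ a ≫ X.δ (r.castPred (Fin.ne_last_of_lt hra)) := by
    simpa using
      (X.δ_comp_δ' (i := r.castPred (Fin.ne_last_of_lt hra)) (j := a) (by simpa using hra)).symm
  rw [map_mul, map_inv, inv_mul_eq_one, ← comp_apply, hδδ, comp_apply, hw, hx r a hr ha hra]

variable (x) in
def hornFillStep (w : X _⦋n + 2⦌) (c : Fin (n + 2)) (r : Fin (n + 3)) (hr : r ≠ k) :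
    X _⦋n + 2⦌ :=
  w * X.σ c ((X.δ r w)⁻¹ * x r hr)

lemma δ_hornFillStep_self {w : X _⦋n + 2⦌} {c : Fin (n + 2)} {r : Fin (n + 3)} (hr : r ≠ k)
    (hrc : r = c.castSucc ∨ r = c.succ) :
    X.δ r (hornFillStep x w c r hr) = x r hr := by
  have hδσ : X.σ c ≫ X.δ r = 𝟙 _ := by
    rcases hrc with rfl | rfl
    · exact X.δ_comp_σ_self
    · exact X.δ_comp_σ_succ
  rw [hornFillStep, map_mul, ← comp_apply, hδσ, id_apply, mul_inv_cancel_left]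

lemma δ_hornFillStep_of_lt_or_gt (hx : IsHornCompatible x) {w : X _⦋n + 2⦌} {c : Fin (n + 2)}
    {r : Fin (n + 3)} (hr : r ≠ k) (hrc : r = c.castSucc ∨ r = c.succ) {a : Fin (n + 3)}
    (ha : a ≠ k) (hac : a < c.castSucc ∨ c.succ < a) (hw : X.δ a w = x a ha) :
    X.δ a (hornFillStep x w c r hr) = x a ha := by
  rw [hornFillStep, map_mul, hw, mul_eq_left]
  rcases hac with hac | hca
  · have har : a < r := by
      rcases hrc with rfl | rfl
      exacts [hac, hac.trans Fin.castSucc_lt_succ]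
    exact δ_σ_eq_one_of_lt hac (δ_castPred_inv_δ_mul_eq_one hx ha hr har hw)
  · have hra : r < a := by
      rcases hrc with rfl | rfl
      exacts [Fin.castSucc_lt_succ.trans hca, hca]
    exact δ_σ_eq_one_of_gt hca (δ_pred_inv_δ_mul_eq_one hx ha hr hra hw)

lemma exists_δ_eq_of_lt (hx : IsHornCompatible x) (p : ℕ) (hp : p ≤ k) :
    ∃ w : X _⦋n + 2⦌, ∀ a (ha : a ≠ k), (a : ℕ) < p → X.δ a w = x a ha := by
  induction p with
  | zero => exact ⟨1, fun a _ h => absurd h (Nat.not_lt_zero _)⟩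
  | succ p ih =>
    obtain ⟨w, hw⟩ := ih (by omega)
    have hpk : (⟨p, by omega⟩ : Fin (n + 3)) ≠ k := Fin.ne_of_val_ne (show p ≠ k by omega)
    refine ⟨hornFillStep x w ⟨p, by omega⟩ ⟨p, by omega⟩ hpk, fun a ha hap => ?_⟩
    rcases Nat.lt_succ_iff_lt_or_eq.mp hap with hap | rfl
    · exact δ_hornFillStep_of_lt_or_gt hx hpk (Or.inl rfl) ha (Or.inl hap) (hw a ha hap)
    · exact δ_hornFillStep_self hpk (Or.inl rfl)

lemma exists_δ_eq_of_lt_or_gt (hx : IsHornCompatible x) (q : ℕ) (hkq : k ≤ q) (hq : q ≤ n + 2) :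
    ∃ w : X _⦋n + 2⦌, ∀ a (ha : a ≠ k), (a : ℕ) < k ∨ q < a → X.δ a w = x a ha := by
  induction hq using Nat.decreasingInduction with
  | self =>
    obtain ⟨w, hw⟩ := exists_δ_eq_of_lt hx k le_rfl
    exact ⟨w, fun a ha h => hw a ha (h.resolve_right (by omega))⟩
  | of_succ q hq ih =>
    obtain ⟨w, hw⟩ := ih (by omega)
    have hqk : (⟨q + 1, by omega⟩ : Fin (n + 3)) ≠ k := Fin.ne_of_val_ne (show q + 1 ≠ k by omega)
    refine ⟨hornFillStep x w ⟨q, hq⟩ ⟨q + 1, by omega⟩ hqk, fun a ha haq => ?_⟩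
    by_cases hqa : (a : ℕ) = q + 1
    · obtain rfl : a = ⟨q + 1, Nat.succ_lt_succ hq⟩ := Fin.ext hqa
      exact δ_hornFillStep_self hqk (Or.inr rfl)
    · refine δ_hornFillStep_of_lt_or_gt hx hqk (Or.inr rfl) ha ?_ (hw a ha (by omega))
      simp only [Fin.lt_def, Fin.val_castSucc, Fin.val_succ]
      omega

theorem exists_δ_eq_of_isHornCompatible (hx : IsHornCompatible x) :
    ∃ z : X _⦋n + 2⦌, ∀ j (hj : j ≠ k), X.δ j z = x j hj := by
  obtain ⟨z, hz⟩ := exists_δ_eq_of_lt_or_gt hx k le_rfl (by omega)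
  exact ⟨z, fun j hj => hz j hj (by have := Fin.val_ne_of_ne hj; omega)⟩

end CategoryTheory.SimplicialObject

open CategoryTheory.SimplicialObject in
instance SSet.kanComplex_comp_forget_grpCat (X : SimplicialObject GrpCat.{u}) :
    KanComplex (X ⋙ forget GrpCat) := by
  rw [KanComplex.iff]
  intro n k f hf
  obtain _ | n := n
  · obtain ⟨j, hj⟩ : ∃ j, j ≠ k := ⟨k.rev, by fin_cases k <;> decide⟩
    refine ⟨yonedaEquiv.symm (X.σ 0 (yonedaEquiv (f j hj))), fun j' hj' => ?_⟩
    obtain rfl : j' = j := by omega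
    rw [stdSimplex.δ_comp_yonedaEquiv_symm]
    exact yonedaEquiv.symm_apply_eq.mpr (δ_σ_zero_apply j' _)
  · obtain ⟨z, hz⟩ := exists_δ_eq_of_isHornCompatible (x := fun j hj => yonedaEquiv (f j hj))
      (fun a b ha hb hab => by
        have := congrArg yonedaEquiv (hf a b ha hb hab)
        rwa [stdSimplex.yonedaEquiv_δ_comp, stdSimplex.yonedaEquiv_δ_comp] at this)
    refine ⟨yonedaEquiv.symm z, fun j hj => ?_⟩
    rw [stdSimplex.δ_comp_yonedaEquiv_symm]
    exact yonedaEquiv.symm_apply_eq.mpr (hz j hj)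

namespace SimplicialGroupOver

variable {Y : Type u} (GG : SimplicialGroupOver Y) (y : Y)

lemma p_app_map {m m' : SimplexCategoryᵒᵖ} (φ : m ⟶ m') (x : GG.G.obj m) :
    GG.p.app m' (GG.G.map φ x) = GG.p.app m x :=
  NatTrans.naturality_apply GG.p φ x

def FiberSimplex (m : SimplexCategoryᵒᵖ) : Type u := {x : GG.G.obj m // GG.p.app m x = y}

instance (m : SimplexCategoryᵒᵖ) : Group (GG.FiberSimplex y m) where
  mul a b := ⟨GG.mul m a.1 b.1 (a.2.trans b.2.symm), (GG.p_mul m _ _ _).trans a.2⟩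
  one := ⟨GG.one m y, GG.p_one m y⟩
  inv a := ⟨GG.inv m a.1, (GG.p_inv m a.1).trans a.2⟩
  mul_assoc a b c := Subtype.ext (GG.mul_assoc m a.1 b.1 c.1 _ _)
  one_mul := by
    rintro ⟨a, rfl⟩
    exact Subtype.ext (GG.one_mul m a)
  mul_one := by
    rintro ⟨a, rfl⟩
    exact Subtype.ext (GG.mul_one m a)
  inv_mul_cancel := by
    rintro ⟨a, rfl⟩
    exact Subtype.ext (GG.inv_mul m a)

def fiber : SimplicialObject GrpCat.{u} where
  obj m := GrpCat.of (GG.FiberSimplex y m)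
  map φ := GrpCat.ofHom
    { toFun a := ⟨GG.G.map φ a.1, (GG.p_app_map φ a.1).trans a.2⟩
      map_one' := Subtype.ext (GG.map_one φ y)
      map_mul' a b := Subtype.ext (GG.map_mul φ a.1 b.1 _ _) }
  map_id m := by
    ext a
    exact Subtype.ext (Functor.map_id_apply GG.G m a.1)
  map_comp φ ψ := by
    ext a
    exact Subtype.ext (Functor.map_comp_apply GG.G φ ψ a.1)

def fiberι : GG.fiber y ⋙ forget GrpCat ⟶ GG.G where
  app _ := ↾fun a => a.1

def fiberLift {A : SSet.{u}} (f : A ⟶ GG.G) (hf : ∀ m a, GG.p.app m (f.app m a) = y) :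
    A ⟶ GG.fiber y ⋙ forget GrpCat where
  app m := ↾fun a => ⟨f.app m a, hf m a⟩
  naturality _ _ φ := by
    ext a
    apply Subtype.ext
    exact NatTrans.naturality_apply f φ a

end SimplicialGroupOver

lemma SSet.app_eq_yonedaEquiv_of_hom_const {Y : Type u} {n : SimplexCategory}
    (g : stdSimplex.obj n ⟶ (Functor.const SimplexCategoryᵒᵖ).obj Y) (m : SimplexCategoryᵒᵖ)
    (a : (stdSimplex.obj n).obj m) : g.app m a = yonedaEquiv g := by
  rw [← yonedaEquiv.symm_apply_apply g]
  rfl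

/-- For any group object `G` in simplicial sets over a constant (discrete) simplicial set
`Y`, the structure map `p : G ⟶ Y` is a Kan fibration, i.e. it has the right lifting
property with respect to all horn inclusions `Λ[n, i] ⟶ Δ[n]`, `n ≥ 1`. -/
theorem simplicial_group_over_discrete_isKanFibration
    (Y : Type u) (GG : SimplicialGroupOver Y) (n : ℕ) (hn : 0 < n) (i : Fin (n + 1)) :
    HasLiftingProperty (SSet.horn.{u} n i).ι GG.p := by
  obtain ⟨n, rfl⟩ := Nat.exists_eq_succ_of_ne_zero hn.ne'
  refine ⟨fun {f g} sq => ?_⟩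
  have hf : ∀ m a, GG.p.app m (f.app m a) = yonedaEquiv g := fun m a =>
    (ConcreteCategory.congr_hom (congr_app sq.w m) a).trans (app_eq_yonedaEquiv_of_hom_const g m _)
  obtain ⟨σ, hσ⟩ := KanComplex.hornFilling (GG.fiberLift _ f hf)
  exact ⟨⟨{ l := σ ≫ GG.fiberι _
            fac_left := by rw [← Category.assoc, ← hσ]; rfl
            fac_right := by
              ext m a
              exact (σ.app m a).2.trans (app_eq_yonedaEquiv_of_hom_const g m a).symm }⟩⟩
end

section
/- Let X be a simplicial object in a complete and cocomplete category 𝒞 and let K be a simplicial set. Then there is a natural isomorphism M_K(Dec₀X) ≅ M_{CK}X, where CK is the cone on K (i.e. σ!(K □ Δ⁰)). -/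
open CategoryTheory Simplicial

/-- The "shift" functor `Δ → Δ`, `[n] ↦ [n+1]`, sending an order map `α` to its extension
fixing the (new) last vertex.  Restriction along its opposite is the décalage functor
`Dec₀` (which strips off the last face and degeneracy at each level). -/
def shiftFun : SimplexCategory ⥤ SimplexCategory where
  obj x := SimplexCategory.mk (x.len + 1)
  map {x y} f := SimplexCategory.Hom.mk
    ⟨Fin.snoc (fun i => (f.toOrderHom i).castSucc) (Fin.last _), by
      intro i j hij
      rcases Fin.eq_castSucc_or_eq_last j with ⟨j', rfl⟩ | rfl
      · rcases Fin.eq_castSucc_or_eq_last i with ⟨i', rfl⟩ | rfl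
        · simpa [Fin.snoc_castSucc, Fin.castSucc_le_castSucc_iff] using
            f.toOrderHom.monotone (by simpa using hij)
        · exact absurd hij (Fin.castSucc_lt_last j').not_ge
      · simp only [Fin.snoc_last]
        exact Fin.le_last _⟩
  map_id x := by
    apply SimplexCategory.Hom.ext
    ext i
    rcases Fin.eq_castSucc_or_eq_last i with ⟨i', rfl⟩ | rfl <;>
      simp [SimplexCategory.Hom.id]
  map_comp {x y z} f g := by
    apply SimplexCategory.Hom.ext
    ext i
    rcases Fin.eq_castSucc_or_eq_last i with ⟨i', rfl⟩ | rfl <;>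
      simp [SimplexCategory.Hom.comp, SimplexCategory.Hom.toOrderHom_mk]
    all_goals (simp only [DFunLike.coe]; simp)

open CategoryTheory.Limits Opposite

universe v u

variable {C : Type u} [Category.{v} C]

/-- The décalage functor `Dec₀ : sSet ⥤ sSet`, restriction along the shift `[n] ↦ [n+1]`. -/
def Dec0SSet : SSet.{0} ⥤ SSet.{0} :=
  (CategoryTheory.Functor.whiskeringLeft _ _ (Type 0)).obj shiftFun.op

/-- The décalage functor `Dec₀ : s𝒞 ⥤ s𝒞` on simplicial objects in `𝒞`. -/
def Dec0C (C : Type u) [Category.{v} C] :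
    (SimplexCategoryᵒᵖ ⥤ C) ⥤ (SimplexCategoryᵒᵖ ⥤ C) :=
  (CategoryTheory.Functor.whiskeringLeft _ _ C).obj shiftFun.op

/-- The generalized matching object functor `M_K : s𝒞 ⥤ 𝒞`, `M_K X = lim_{Δⁿ → K} Xₙ`,
realized as the limit over the category of elements of `K`. -/
noncomputable def matchingFunctor (K : SSet.{0}) [HasLimitsOfSize.{0,0} C] :
    (SimplexCategoryᵒᵖ ⥤ C) ⥤ C :=
  (Functor.whiskeringLeft K.Elements SimplexCategoryᵒᵖ C).obj (CategoryOfElements.π K) ⋙ lim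

/-!
Since `Dec₀` is precomposition with the shift `u = shiftFun.op`, the unit `K ⟶ u ⋙ Cn K` of
`Cn ⊣ Dec₀` exhibits `Cn K` as a pointwise left Kan extension of `K` along `u`. Pointwiseness says
that each element of `(Cn K)_d` comes from some `x ∈ K_a` along some `u a ⟶ d`, uniquely up to the
zigzags generating the colimit relation; this is exactly initiality of the induced functor
`K.Elements ⥤ (Cn K).Elements`. Restricting a limit along an initial functor does not change it,
and the restriction of `π_{Cn K} ⋙ X` to `K.Elements` is `π_K ⋙ Dec₀ X`.
-/

universe w

open CategoryTheory.Functor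

namespace CategoryTheory.Limits

lemma Cocone.ι_app_eq_of_eqvGen {J : Type*} [Category J]
    {F : J ⥤ Type w} (c : Cocone F) {p q : Σ j, F.obj j}
    (h : Relation.EqvGen F.ColimitTypeRel p q) : c.ι.app p.1 p.2 = c.ι.app q.1 q.2 :=
  congrArg (F.descColimitType (F.coconeTypesEquiv.symm c)) ((F.ιColimitType_eq_iff p.2 q.2).2 h)

lemma Types.eqvGen_of_isColimit {J : Type*} [Category J]
    {F : J ⥤ Type w} {c : Cocone F} (hc : IsColimit c) {p q : Σ j, F.obj j}
    (h : c.ι.app p.1 p.2 = c.ι.app q.1 q.2) : Relation.EqvGen F.ColimitTypeRel p q :=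
  (F.ιColimitType_eq_iff p.2 q.2).1 <|
    ((isColimit_iff_coconeTypesIsColimit c).1 ⟨hc⟩).bijective.1 h

end CategoryTheory.Limits

namespace CategoryTheory.Functor.LeftExtension

variable {A B : Type*} [Category A] [Category B] {u : A ⥤ B} {K : A ⥤ Type w}
  (E : u.LeftExtension K)

def elementsFunctor : K.Elements ⥤ E.right.Elements :=
  NatTrans.mapElements E.hom ⋙ Elements.precomp u E.right

abbrev costructuredArrowMk {b : B} {y : E.right.obj b}
    (p : Σ j, (CostructuredArrow.proj u b ⋙ K).obj j) (hp : (E.coconeAt b).ι.app p.1 p.2 = y) :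
    CostructuredArrow E.elementsFunctor (E.right.elementsMk b y) :=
  CostructuredArrow.mk (Y := K.elementsMk p.1.left p.2) ⟨p.1.hom, hp⟩

lemma zigzag_costructuredArrowMk {b : B} {y : E.right.obj b}
    {p q : Σ j, (CostructuredArrow.proj u b ⋙ K).obj j}
    (h : Relation.EqvGen (CostructuredArrow.proj u b ⋙ K).ColimitTypeRel p q)
    (hp : (E.coconeAt b).ι.app p.1 p.2 = y) (hq : (E.coconeAt b).ι.app q.1 q.2 = y) :
    Zigzag (E.costructuredArrowMk p hp) (E.costructuredArrowMk q hq) := by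
  induction h with
  | rel p q hpq =>
    obtain ⟨f, hf⟩ := hpq
    exact Zigzag.of_hom <| CostructuredArrow.homMk
      (CategoryOfElements.homMk _ _ f.left hf.symm) (by ext; exact CostructuredArrow.w f)
  | refl => exact Zigzag.refl _
  | symm p q _ ih => exact (ih hq hp).symm
  | trans p q r hpq _ ih₁ ih₂ =>
    have hq' := ((E.coconeAt b).ι_app_eq_of_eqvGen hpq).symm.trans hp
    exact (ih₁ hp hq').trans (ih₂ hq' hq)

lemma elementsFunctor_initial (hE : E.IsPointwiseLeftKanExtension) :
    E.elementsFunctor.Initial where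
  out := by
    rintro ⟨b, y⟩
    change IsConnected (CostructuredArrow _ (E.right.elementsMk b y))
    obtain ⟨j₀, x₀, hx₀⟩ := Types.jointly_surjective_of_isColimit (hE b) y
    have : Nonempty (CostructuredArrow E.elementsFunctor (E.right.elementsMk b y)) :=
      ⟨E.costructuredArrowMk ⟨j₀, x₀⟩ hx₀⟩
    apply zigzag_isConnected
    rintro ⟨⟨a, x⟩, ⟨⟨⟩⟩, ⟨f, hf⟩⟩ ⟨⟨a', x'⟩, ⟨⟨⟩⟩, ⟨f', hf'⟩⟩
    exact E.zigzag_costructuredArrowMk (p := ⟨CostructuredArrow.mk f, x⟩)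
      (q := ⟨CostructuredArrow.mk f', x'⟩)
      (Types.eqvGen_of_isColimit (hE b) (hf.trans hf'.symm)) hf hf'

end CategoryTheory.Functor.LeftExtension

noncomputable def CategoryTheory.Adjunction.isPointwiseLeftKanExtensionUnitApp
    {A B D : Type*} [Category A] [Category B] [Category D] {u : A ⥤ B}
    [∀ F : A ⥤ D, u.HasPointwiseLeftKanExtension F]
    {Cn : (A ⥤ D) ⥤ (B ⥤ D)} (adj : Cn ⊣ (whiskeringLeft A B D).obj u) (K : A ⥤ D) :
    (LeftExtension.mk (Cn.obj K) (adj.unit.app K)).IsPointwiseLeftKanExtension :=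
  LeftExtension.isPointwiseLeftKanExtensionEquivOfIso
    (StructuredArrow.isoMk (((u.lanAdjunction D).leftAdjointUniq adj).app K)
      (by
        have h := (u.lanAdjunction D).unit_leftAdjointUniq_hom_app adj K
        rwa [lanAdjunction_unit] at h))
    (u.isPointwiseLeftKanExtensionLeftKanExtensionUnit K)

theorem matching_dec0_cone_general
    [HasLimitsOfSize.{0,0} C]
    (Cn : SSet.{0} ⥤ SSet.{0}) (adj : Cn ⊣ Dec0SSet) (K : SSet.{0}) :
    Nonempty ((matchingFunctor (C := C) (Cn.obj K)) ≅
      Dec0C C ⋙ matchingFunctor (C := C) K) := by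
  let E : shiftFun.op.LeftExtension K := .mk (Cn.obj K) (adj.unit.app K)
  have : E.elementsFunctor.Initial :=
    E.elementsFunctor_initial (Adjunction.isPointwiseLeftKanExtensionUnitApp adj K)
  -- `E.elementsFunctor ⋙ π (Cn.obj K)` is `π K ⋙ shiftFun.op` on the nose.
  exact ⟨isoWhiskerLeft _ (Functor.Initial.limIso E.elementsFunctor).symm⟩

/-- Let `X` be a simplicial object in a complete and cocomplete category `𝒞` and `K` a
simplicial set.  Then there is an isomorphism `M_K(Dec₀X) ≅ M_{CK}X`, natural in `X`,
where `C ⊣ Dec₀` is the cone functor (`CK = σ!(K □ Δ⁰)` is the cone on `K`). -/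
theorem matching_dec0_cone
    [HasLimitsOfSize.{0,0} C] [HasColimitsOfSize.{0,0} C]
    (Cn : SSet.{0} ⥤ SSet.{0}) (adj : Cn ⊣ Dec0SSet) (K : SSet.{0}) :
    Nonempty ((matchingFunctor (C := C) (Cn.obj K)) ≅
      Dec0C C ⋙ matchingFunctor (C := C) K) :=
  matching_dec0_cone_general Cn adj K
end

section
/- Let 𝒞 be a category with finite limits, B an object of 𝒞, and X a simplicial object in 𝒞/B. Then the matching object of X computed in 𝒞/B agrees with the matching object of the underlying simplicial object computed in 𝒞: M^B_{Λⁿₖ}X = M_{Λⁿₖ}X for all 0 ≤ k ≤ n, n ≥ 1, and M^B_{∂Δⁿ}X = M_{∂Δⁿ}X for all n ≥ 2. -/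
open CategoryTheory CategoryTheory.Limits Simplicial

universe v u

/-!
The forgetful functor `Over B ⥤ C` creates limits of connected shape, so it suffices that the
categories of elements of `Λ[n, k]` (`n ≥ 1`) and `∂Δ[n]` (`n ≥ 2`) are connected. The category
of elements of a simplicial set is connected as soon as the simplicial set is: every simplex is
linked to one of its vertices, and two vertices joined by an edge are linked through that edge.
Both simplicial sets are connected because every vertex is joined by an edge to a fixed one:
to `k` in the horn (the horn is a cone on `k`), to `0` in the boundary (all edges of `Δ[n]` lie
in `∂Δ[n]` once `n ≥ 2`).
-/

namespace SSet

open Opposite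

section

variable {X : SSet.{u}}

lemma zigzag_elementsMk_vertex {m : SimplexCategoryᵒᵖ} (s : X.obj m) :
    Zigzag (X.elementsMk m s)
      (X.elementsMk (op ⦋0⦌) (X.map (SimplexCategory.const ⦋0⦌ m.unop 0).op s)) :=
  Zigzag.of_hom (CategoryOfElements.homMk _ _ (SimplexCategory.const ⦋0⦌ m.unop 0).op rfl)

lemma zigzag_elementsMk_of_edge {x₀ x₁ : X _⦋0⦌} (e : X.Edge x₀ x₁) :
    Zigzag (X.elementsMk (op ⦋0⦌) x₀) (X.elementsMk (op ⦋0⦌) x₁) :=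
  (Zigzag.of_hom (CategoryOfElements.homMk (X.elementsMk _ e.edge) (X.elementsMk _ x₀)
    (SimplexCategory.δ 1).op e.src_eq)).symm.trans
    (Zigzag.of_hom (CategoryOfElements.homMk (X.elementsMk _ e.edge) (X.elementsMk _ x₁)
    (SimplexCategory.δ 0).op e.tgt_eq))

lemma zigzag_elementsMk_of_π₀_mk_eq {x₀ x₁ : X _⦋0⦌} (h : π₀.mk x₀ = π₀.mk x₁) :
    Zigzag (X.elementsMk (op ⦋0⦌) x₀) (X.elementsMk (op ⦋0⦌) x₁) := by
  rw [π₀.mk_eq_mk_iff] at h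
  induction h with
  | rel _ _ h => exact zigzag_elementsMk_of_edge h.some
  | refl => exact Zigzag.refl _
  | symm _ _ _ ih => exact ih.symm
  | trans _ _ _ _ _ ih₁ ih₂ => exact ih₁.trans ih₂

instance isConnected_elements [X.IsConnected] : IsConnected X.Elements := by
  let x₀ : X.Elements := X.elementsMk (op ⦋0⦌) (Classical.arbitrary _)
  have : Nonempty X.Elements := ⟨x₀⟩
  suffices h : ∀ e : X.Elements, Zigzag e x₀ from
    zigzag_isConnected fun e₁ e₂ => (h e₁).trans (h e₂).symm
  rintro ⟨m, s⟩
  exact (zigzag_elementsMk_vertex s).trans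
    (zigzag_elementsMk_of_π₀_mk_eq (Subsingleton.elim _ _))

lemma isConnected_of_forall_π₀_mk_eq (x₀ : X _⦋0⦌) (h : ∀ x, π₀.mk x = π₀.mk x₀) :
    X.IsConnected where
  allEq a b := by
    induction a; induction b; exact (h _).trans (h _).symm
  nonempty := ⟨x₀⟩

end

namespace stdSimplex

variable {n : ℕ}

lemma δ_one_edge (a b : Fin (n + 1)) (hab : a ≤ b) :
    (Δ[n] : SSet.{u}).δ 1 (edge n a b hab) = obj₀Equiv.symm a := by
  ext i; fin_cases i; rfl

lemma δ_zero_edge (a b : Fin (n + 1)) (hab : a ≤ b) :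
    (Δ[n] : SSet.{u}).δ 0 (edge n a b hab) = obj₀Equiv.symm b := by
  ext i; fin_cases i; rfl

end stdSimplex

namespace Subcomplex

open SSet.stdSimplex

variable {n : ℕ} (A : (Δ[n] : SSet.{u}).Subcomplex)

lemma π₀_mk_eq_of_edge_mem {a b : Fin (n + 1)} (hab : a ≤ b) (h : edge n a b hab ∈ A.obj _) :
    π₀.mk (X := A.toSSet) ⟨obj₀Equiv.symm a, δ_one_edge a b hab ▸ A.map _ h⟩ =
      π₀.mk (X := A.toSSet) ⟨obj₀Equiv.symm b, δ_zero_edge a b hab ▸ A.map _ h⟩ := by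
  convert π₀.sound (Edge.mk' (X := A.toSSet) ⟨_, h⟩) using 2
  · exact congrArg π₀.mk (Subtype.ext (δ_one_edge a b hab).symm)
  · exact congrArg π₀.mk (Subtype.ext (δ_zero_edge a b hab).symm)

lemma isConnected_of_edge_mem (c : Fin (n + 1)) (hc : obj₀Equiv.symm c ∈ A.obj _)
    (hA : ∀ v, obj₀Equiv.symm v ∈ A.obj _ →
      (∃ h : v ≤ c, edge n v c h ∈ A.obj _) ∨ ∃ h : c ≤ v, edge n c v h ∈ A.obj _) :
    A.toSSet.IsConnected := by
  refine isConnected_of_forall_π₀_mk_eq ⟨_, hc⟩ fun ⟨x, hx⟩ => ?_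
  obtain ⟨v, rfl⟩ := obj₀Equiv.symm.surjective x
  rcases hA v hx with ⟨hvc, he⟩ | ⟨hcv, he⟩
  · exact π₀_mk_eq_of_edge_mem A hvc he
  · exact (π₀_mk_eq_of_edge_mem A hcv he).symm

end Subcomplex

lemma mem_horn_of_mem_range_or_eq {n d d' : ℕ} {k : Fin (n + 1)} {s : Δ[n] _⦋d⦌} {t : Δ[n] _⦋d'⦌}
    (ht : t ∈ (horn.{u} n k).obj _) (h : ∀ i, s i ∈ Set.range t ∨ s i = k) :
    s ∈ (horn.{u} n k).obj _ := by
  obtain ⟨j, hjk, hjt⟩ := (mem_horn_iff_notMem_range _ _).1 ht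
  refine (mem_horn_iff_notMem_range _ _).2 ⟨j, hjk, ?_⟩
  rintro ⟨i, rfl⟩
  exact (h i).elim hjt hjk

instance isConnected_horn (n : ℕ) (k : Fin (n + 2)) :
    (horn.{u} (n + 1) k).toSSet.IsConnected := by
  refine Subcomplex.isConnected_of_edge_mem _ k ?_ fun v hv => ?_
  · obtain ⟨j, hj⟩ := exists_ne k
    exact (mem_horn_iff_notMem_range _ _).2 ⟨j, hj, fun ⟨_, h⟩ => hj h.symm⟩
  · rcases le_total v k with h | h
    · refine .inl ⟨h, mem_horn_of_mem_range_or_eq hv fun i => ?_⟩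
      fin_cases i
      exacts [.inl ⟨0, rfl⟩, .inr rfl]
    · refine .inr ⟨h, mem_horn_of_mem_range_or_eq hv fun i => ?_⟩
      fin_cases i
      exacts [.inr rfl, .inl ⟨0, rfl⟩]

instance isConnected_boundary (n : ℕ) : (boundary.{u} (n + 2)).toSSet.IsConnected :=
  Subcomplex.isConnected_of_edge_mem _ 0 (by rw [boundary_obj_eq_univ 0 (n + 2)]; trivial)
    fun v _ => .inr ⟨Fin.zero_le v, by rw [boundary_obj_eq_univ 1 (n + 2)]; trivial⟩

end SSet

/-- `M_K X` is encoded as the limit of `X ∘ π` over the category of elements of `K`, so the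
agreement of matching objects is the preservation of these limits by `Over.forget B`. -/
theorem slice_matching_object_agrees_general
    {C : Type u} [Category.{v} C] (B : C)
    (X : SimplexCategoryᵒᵖ ⥤ Over B) :
    (∀ (n : ℕ), 1 ≤ n → ∀ (k : Fin (n + 1)),
      Nonempty (PreservesLimit
        (CategoryOfElements.π (SSet.horn n k) ⋙ X) (Over.forget B))) ∧
    (∀ (n : ℕ), 2 ≤ n →
      Nonempty (PreservesLimit
        (CategoryOfElements.π (SSet.boundary n) ⋙ X) (Over.forget B))) := by
  refine ⟨fun n hn k => ?_, fun n hn => ?_⟩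
  · obtain ⟨n, rfl⟩ := Nat.exists_eq_add_of_le' hn
    exact ⟨inferInstance⟩
  · obtain ⟨n, rfl⟩ := Nat.exists_eq_add_of_le' hn
    exact ⟨inferInstance⟩

/-- Let `𝒞` be a category with finite limits, `B` an object of `𝒞` and `X` a simplicial
object in `𝒞/B`.  Then the matching objects of `X` computed in `𝒞/B` agree with the
matching objects of the underlying simplicial object computed in `𝒞`:
`M^B_{Λⁿₖ}X = M_{Λⁿₖ}X` for `n ≥ 1`, `0 ≤ k ≤ n` and `M^B_{∂Δⁿ}X = M_{∂Δⁿ}X` for `n ≥ 2`.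
We realize the generalized matching object `M_K X` as the limit of
`X ∘ π : (Δ ↓ K)ᵒᵖ → 𝒞` over the category of elements of `K`; the statement is that the
forgetful functor `𝒞/B → 𝒞` preserves these limits. -/
theorem slice_matching_object_agrees
    {C : Type u} [Category.{v} C] [HasFiniteLimits C] (B : C)
    (X : SimplexCategoryᵒᵖ ⥤ Over B) :
    (∀ (n : ℕ), 1 ≤ n → ∀ (k : Fin (n + 1)),
      Nonempty (PreservesLimit
        (CategoryOfElements.π (SSet.horn n k) ⋙ X) (Over.forget B))) ∧
    (∀ (n : ℕ), 2 ≤ n →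
      Nonempty (PreservesLimit
        (CategoryOfElements.π (SSet.boundary n) ⋙ X) (Over.forget B))) :=
  slice_matching_object_agrees_general B X
end

section
/- For 0 ≤ k < n, the horn Λⁿₖ decomposes as the pushout Λⁿₖ = C(Λ^{n−1}ₖ) ∪_{Λ^{n−1}ₖ} Δ^{n−1}, where C denotes the cone (join with Δ⁰). Equivalently, C(Λ^{n−1}ₖ) = ⋃_{i≠k, 0≤i≤n−1} dⁱ(Δ^{n−1}) inside Δⁿ, and adjoining the last face dⁿ(Δ^{n−1}) yields Λⁿₖ. -/
theorem exists_ne_notMem_iff_or {β : Type*} {S : Set β} {k b : β} (hb : b ≠ k) :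
    (∃ j, j ≠ k ∧ j ∉ S) ↔ (∃ i, i ≠ k ∧ i ≠ b ∧ i ∉ S) ∨ b ∉ S := by
  constructor
  · rintro ⟨j, hjk, hjS⟩
    by_cases hjb : j = b
    · exact Or.inr (hjb ▸ hjS)
    · exact Or.inl ⟨j, hjk, hjb, hjS⟩
  · rintro (⟨i, hik, -, hiS⟩ | hbS)
    · exact ⟨i, hik, hiS⟩
    · exact ⟨b, hb, hbS⟩

theorem Fin.exists_ne_ne_last_iff_exists_castSucc {n : ℕ} {k : Fin (n + 1)} (hk : (k : ℕ) < n)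
    (P : Fin (n + 1) → Prop) :
    (∃ i, i ≠ k ∧ i ≠ Fin.last n ∧ P i) ↔ ∃ j : Fin n, j ≠ k.castLT hk ∧ P j.castSucc := by
  conv_lhs => rw [← Fin.castSucc_castLT k hk]
  simp only [Fin.exists_fin_succ', Fin.castSucc_inj, ne_eq, Fin.castSucc_ne_last,
    not_false_eq_true, true_and, not_true_eq_false, false_and, and_false, or_false]

/-- For `0 ≤ k < n` the horn `Λⁿₖ` decomposes as
`Λⁿₖ = C(Λ^{n−1}ₖ) ∪_{Λ^{n−1}ₖ} Δ^{n−1}`, where the cone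
`C(Λ^{n−1}ₖ) = ⋃_{i ≠ k, 0 ≤ i ≤ n−1} dⁱ(Δ^{n−1})` inside `Δⁿ` and `Δ^{n−1}` is included
as the last face `dⁿ(Δ^{n−1})`.  We state this levelwise: an `ℓ`-simplex of `Δⁿ` is a
monotone map `α : Fin (ℓ+1) →o Fin (n+1)`; it lies in `Λⁿₖ` iff some `j ≠ k` is omitted
from its range, it lies in `dⁱ(Δ^{n−1})` iff `i` is omitted from its range.  The first
conjunct says `Λⁿₖ` is the union of the cone part and the last face; the second says the
intersection of the cone part with the last face is the copy `dⁿ(Λ^{n−1}ₖ)` of `Λ^{n−1}ₖ`. -/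
theorem horn_cone_pushout_decomposition (n : ℕ) (k : Fin (n + 1)) (hk : (k : ℕ) < n)
    (ℓ : ℕ) (α : Fin (ℓ + 1) →o Fin (n + 1)) :
    ((∃ j : Fin (n + 1), j ≠ k ∧ j ∉ Set.range α) ↔
      ((∃ i : Fin (n + 1), i ≠ k ∧ i ≠ Fin.last n ∧ i ∉ Set.range α) ∨
        Fin.last n ∉ Set.range α)) ∧
    (((∃ i : Fin (n + 1), i ≠ k ∧ i ≠ Fin.last n ∧ i ∉ Set.range α) ∧
        Fin.last n ∉ Set.range α) ↔
      (Fin.last n ∉ Set.range α ∧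
        ∃ j : Fin n, j ≠ ⟨(k : ℕ), hk⟩ ∧ j.castSucc ∉ Set.range α)) := by
  have hlast : Fin.last n ≠ k := (Fin.lt_last_iff_ne_last.mp hk).symm
  refine ⟨exists_ne_notMem_iff_or hlast, ?_⟩
  rw [and_comm, Fin.exists_ne_ne_last_iff_exists_castSucc hk]
  rfl
end

section
/- Let G be a simplicial group acting principally on a simplicial set P over X, i.e. P → X is a G-torsor: the action P × G → P is over X and the map P × G → P ×_X P, (p,g) ↦ (p, pg), is an isomorphism. If each Pₙ → Xₙ is surjective, then P → X is a Kan fibration. -/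
/-!
Lift `x ∈ Xₙ₊₁` to some `τ ∈ Pₙ₊₁`. Each face `dⱼ τ` lies in the same fibre as the prescribed
horn simplex `uⱼ`, so principality gives unique `gⱼ ∈ Gₙ` with `dⱼ τ · gⱼ = uⱼ`; uniqueness makes
the `gⱼ` a compatible horn in `G`. Simplicial groups fill horns (Moore): correct the faces one at
a time by multiplying with degenerate simplices, first the faces below the missing one in
increasing order, then those above it in decreasing order. If `g` fills the horn of the `gⱼ`,
then `τ · g` fills the horn `u` over `x`.
-/

open CategoryTheory SSet Simplicial SimplexCategory

universe u

namespace SimplexCategory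

lemma exists_δ_comp_σ_comp_δ_eq_comp_δ {m : ℕ} {j r : Fin (m + 2)} {c : Fin (m + 1)}
    (hr : r = c.castSucc ∨ r = c.succ) (hjc : j.val ≠ c.val) (hjc' : j.val ≠ c.val + 1) :
    ∃ e : ⦋m⦌ ⟶ ⦋m⦌, δ j ≫ σ c ≫ δ r = e ≫ δ j := by
  refine eq_comp_δ_of_not_surjective' _ j fun x => ?_
  have hx := Fin.val_ne_of_ne (Fin.succAbove_ne j x)
  -- `σ c ≫ δ r` only moves `c` and `c + 1`, and stays inside `{c, c + 1}`.
  rcases hr with rfl | rfl <;>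
  · simp only [comp_toOrderHom, δ, σ, OrderHom.comp_coe, Function.comp_apply, Fin.ne_iff_vne,
      mkHom, Hom.toOrderHom_mk, OrderEmbedding.toOrderHom_coe, Fin.succAboveOrderEmb_apply,
      Fin.predAboveOrderHom_coe]
    generalize j.succAbove x = y at hx ⊢
    unfold Fin.predAbove Fin.succAbove
    split_ifs with h₁ <;>
    · -- `h₁` occurs in `castPred` proof terms, so only a copy of it can be rewritten.
      have := h₁
      simp only [Fin.lt_def, Fin.val_castSucc, Fin.val_succ, Fin.coe_castPred, Fin.val_pred] at *
      omega

end SimplexCategory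

namespace SSet

lemma horn.map_face_eq_map_face {P : SSet.{u}} {m : ℕ} {i : Fin (m + 2)}
    (u : (Λ[m + 1, i] : SSet.{u}) ⟶ P) {k : SimplexCategory} {f₁ f₂ : k ⟶ ⦋m⦌}
    {j₁ j₂ : Fin (m + 2)} (hj₁ : j₁ ≠ i) (hj₂ : j₂ ≠ i) (h : f₁ ≫ δ j₁ = f₂ ≫ δ j₂) :
    P.map f₁.op (u.app _ (horn.face i j₁ hj₁)) = P.map f₂.op (u.app _ (horn.face i j₂ hj₂)) := by
  rw [← NatTrans.naturality_apply, ← NatTrans.naturality_apply]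
  congr 1
  exact Subtype.ext (stdSimplex.objEquiv.injective h)

lemma hasLiftingProperty_horn_ι_of_exists {P X : SSet.{u}} (p : P ⟶ X) {m : ℕ}
    (i : Fin (m + 2))
    (h : ∀ (u : (Λ[m + 1, i] : SSet.{u}) ⟶ P) (x : X _⦋m + 1⦌),
      (∀ j hj, p.app _ (u.app _ (horn.face i j hj)) = X.map (δ j).op x) →
      ∃ τ : P _⦋m + 1⦌, p.app _ τ = x ∧ ∀ j hj, P.map (δ j).op τ = u.app _ (horn.face i j hj)) :
    HasLiftingProperty Λ[m + 1, i].ι p where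
  sq_hasLift {u v} sq := by
    obtain ⟨τ, hτ, hfaces⟩ := h u (yonedaEquiv v) fun j hj => by
      rw [yonedaEquiv_naturality, yonedaEquiv_comp, yonedaEquiv_map]
      exact ConcreteCategory.congr_hom (congr_app sq.w _) (horn.face i j hj)
    refine ⟨⟨⟨yonedaEquiv.symm τ, horn.hom_ext _ _ fun j hj => ?_, ?_⟩⟩⟩
    · rw [← hfaces j hj]
      rfl
    · apply yonedaEquiv.injective
      rw [yonedaEquiv_comp, Equiv.apply_symm_apply, hτ]

end SSet

namespace SimplicialGroup

section

variable (G : SimplicialObject GrpCat.{u}) {m : ℕ} {i : Fin (m + 2)}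
  (y : ∀ j : Fin (m + 2), j ≠ i → G _⦋m⦌)

def IsHornCompatible : Prop :=
  ∀ ⦃k : SimplexCategory⦄ (f₁ f₂ : k ⟶ ⦋m⦌) (j₁ j₂ : Fin (m + 2)) (hj₁ : j₁ ≠ i) (hj₂ : j₂ ≠ i),
    f₁ ≫ δ j₁ = f₂ ≫ δ j₂ → G.map f₁.op (y j₁ hj₁) = G.map f₂.op (y j₂ hj₂)

def IsPartialFiller (S : Set (Fin (m + 2))) (w : G _⦋m + 1⦌) : Prop :=
  ∀ j (hj : j ≠ i), j ∈ S → G.map (δ j).op w = y j hj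

variable {G y}

lemma IsPartialFiller.mono {S T : Set (Fin (m + 2))} {w : G _⦋m + 1⦌} (hST : S ⊆ T)
    (hw : IsPartialFiller G y T w) : IsPartialFiller G y S w :=
  fun j hj hjS => hw j hj (hST hjS)

/-- Multiplying `w` by `s_c ((d_r w)⁻¹ y_r)` corrects its `r`-th face; an already correct face
`j ∉ {c, c + 1}` stays correct, since `d_j s_c ((d_r w)⁻¹ y_r)` is trivial by compatibility. -/
lemma exists_isPartialFiller_insert (hy : IsHornCompatible G y) {S : Set (Fin (m + 2))}
    {w : G _⦋m + 1⦌} (hw : IsPartialFiller G y S w) {r : Fin (m + 2)} (hri : r ≠ i)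
    {c : Fin (m + 1)} (hr : r = c.castSucc ∨ r = c.succ)
    (hS : ∀ j ∈ S, j.val ≠ c.val ∧ j.val ≠ c.val + 1) :
    ∃ w' : G _⦋m + 1⦌, IsPartialFiller G y (insert r S) w' := by
  set h := (G.map (δ r).op w)⁻¹ * y r hri
  have hrc : δ r ≫ σ c = 𝟙 _ := by
    rcases hr with rfl | rfl
    exacts [δ_comp_σ_self, δ_comp_σ_succ]
  refine ⟨w * G.map (σ c).op h, ?_⟩
  rintro j hj (rfl | hjS)
  · rw [map_mul, ← GrpCat.comp_apply, ← Functor.map_comp, ← op_comp, hrc]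
    simp [h]
  · obtain ⟨e, he⟩ := exists_δ_comp_σ_comp_δ_eq_comp_δ hr (hS j hjS).1 (hS j hjS).2
    have key : G.map (δ j ≫ σ c).op (G.map (δ r).op w) = G.map (δ j ≫ σ c).op (y r hri) :=
      calc G.map (δ j ≫ σ c).op (G.map (δ r).op w)
          = G.map (e ≫ δ j).op w := by
            simp only [← he, op_comp, Functor.map_comp, GrpCat.comp_apply]
        _ = G.map e.op (y j hj) := by
            rw [op_comp, Functor.map_comp, GrpCat.comp_apply, hw j hj hjS]
        _ = G.map (δ j ≫ σ c).op (y r hri) := hy e _ j r hj hri (by simpa using he.symm)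
    have h_trivial : G.map (δ j ≫ σ c).op h = 1 := by
      rw [map_mul, map_inv, key, inv_mul_cancel]
    rw [map_mul, ← GrpCat.comp_apply, ← Functor.map_comp, ← op_comp, h_trivial, mul_one,
      hw j hj hjS]

lemma exists_isPartialFiller_lt (hy : IsHornCompatible G y) (a : ℕ) (ha : a ≤ i.val) :
    ∃ w : G _⦋m + 1⦌, IsPartialFiller G y {j | j.val < a} w := by
  induction a with
  | zero => exact ⟨1, fun j _ hj => absurd hj (Nat.not_lt_zero _)⟩
  | succ a ih =>
    obtain ⟨w, hw⟩ := ih (by omega)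
    obtain ⟨w', hw'⟩ := exists_isPartialFiller_insert hy hw (r := ⟨a, by omega⟩)
      (c := ⟨a, by omega⟩) (Fin.ne_of_val_ne (show a ≠ i.val by omega)) (Or.inl rfl)
      fun j (hj : j.val < a) => by dsimp only; omega
    refine ⟨w', hw'.mono fun j hj => ?_⟩
    simp only [Set.mem_insert_iff, Set.mem_ofPred_eq, Fin.ext_iff] at hj ⊢
    omega

lemma exists_isPartialFiller_lt_or_le (hy : IsHornCompatible G y) (b : ℕ) (hib : i.val < b)
    (hb : b ≤ m + 2) :
    ∃ w : G _⦋m + 1⦌, IsPartialFiller G y {j | j.val < i.val ∨ b ≤ j.val} w := by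
  revert hib
  induction hb using Nat.decreasingInduction with
  | self =>
    intro
    obtain ⟨w, hw⟩ := exists_isPartialFiller_lt hy i.val le_rfl
    exact ⟨w, hw.mono fun j (hj : j.val < i.val ∨ m + 2 ≤ j.val) => show j.val < i.val by omega⟩
  | of_succ b hb ih =>
    intro hib
    obtain ⟨w, hw⟩ := ih (by omega)
    obtain ⟨w', hw'⟩ := exists_isPartialFiller_insert hy hw (r := ⟨b, hb⟩)
      (c := ⟨b - 1, by omega⟩) (Fin.ne_of_val_ne (show b ≠ i.val by omega))
      (Or.inr (Fin.ext (by simp only [Fin.val_succ]; omega)))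
      fun j (hj : j.val < i.val ∨ b + 1 ≤ j.val) => by dsimp only; omega
    refine ⟨w', hw'.mono fun j hj => ?_⟩
    simp only [Set.mem_insert_iff, Set.mem_ofPred_eq, Fin.ext_iff] at hj ⊢
    omega

theorem exists_horn_filler (hy : IsHornCompatible G y) :
    ∃ w : G _⦋m + 1⦌, ∀ j (hj : j ≠ i), G.map (δ j).op w = y j hj := by
  obtain ⟨w, hw⟩ := exists_isPartialFiller_lt_or_le hy (i.val + 1) (by omega) (by omega)
  refine ⟨w, fun j hj => hw j hj ?_⟩
  have := Fin.val_ne_of_ne hj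
  show j.val < i.val ∨ i.val + 1 ≤ j.val
  omega

end

lemma isHornCompatible_of_act_eq_horn_face {G : SimplicialObject GrpCat.{u}} {P : SSet.{u}}
    (a : ∀ m : SimplexCategoryᵒᵖ, P.obj m → ↑(G.obj m) → P.obj m)
    (ha_map : ∀ {m m'} (f : m ⟶ m') x g, P.map f (a m x g) = a m' (P.map f x) (G.map f g))
    (ha_inj : ∀ m x, Function.Injective (a m x)) {m : ℕ} {i : Fin (m + 2)}
    (u : (Λ[m + 1, i] : SSet.{u}) ⟶ P) (τ : P _⦋m + 1⦌) (g : ∀ j : Fin (m + 2), j ≠ i → G _⦋m⦌)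
    (hg : ∀ j hj, a _ (P.map (δ j).op τ) (g j hj) = u.app _ (horn.face i j hj)) :
    IsHornCompatible G g := by
  intro k f₁ f₂ j₁ j₂ hj₁ hj₂ hf
  apply ha_inj _ (P.map (f₁ ≫ δ j₁).op τ)
  calc a _ (P.map (f₁ ≫ δ j₁).op τ) (G.map f₁.op (g j₁ hj₁))
      = P.map f₁.op (u.app _ (horn.face i j₁ hj₁)) := by
        rw [← hg, ha_map, op_comp, Functor.map_comp_apply]
    _ = P.map f₂.op (u.app _ (horn.face i j₂ hj₂)) := horn.map_face_eq_map_face u hj₁ hj₂ hf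
    _ = a _ (P.map (f₁ ≫ δ j₁).op τ) (G.map f₂.op (g j₂ hj₂)) := by
        rw [← hg, ha_map, hf, op_comp, Functor.map_comp_apply]

end SimplicialGroup

theorem torsor_isKanFibration_general
    (G : CategoryTheory.SimplicialObject GrpCat.{u}) (P X : SSet.{u}) (p : P ⟶ X)
    (a : ∀ m : SimplexCategoryᵒᵖ, P.obj m → ↑(G.obj m) → P.obj m)
    -- the action is simplicial
    (ha_map : ∀ {m m'} (f : m ⟶ m') x g, P.map f (a m x g) = a m' (P.map f x) (G.map f g))
    -- the action is over `X`
    (ha_over : ∀ m x g, p.app m (a m x g) = p.app m x)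
    -- principality: the shear map `P × G → P ×_X P` is an isomorphism
    (hprin : ∀ m (y z : P.obj m), p.app m y = p.app m z → ∃! g : ↑(G.obj m), a m y g = z)
    -- local triviality over sets: each `Pₙ → Xₙ` is onto
    (hsurj : ∀ m, Function.Surjective (p.app m)) :
    ∀ (n : ℕ), 0 < n → ∀ (i : Fin (n + 1)), HasLiftingProperty (SSet.horn.{u} n i).ι p := by
  rintro n hn i
  obtain ⟨m, rfl⟩ := Nat.exists_eq_add_one_of_ne_zero hn.ne'
  refine SSet.hasLiftingProperty_horn_ι_of_exists p i fun u x hux => ?_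
  obtain ⟨τ, rfl⟩ := hsurj _ x
  have hfib : ∀ j hj, p.app _ (P.map (δ j).op τ) = p.app _ (u.app _ (horn.face i j hj)) :=
    fun j hj => (NatTrans.naturality_apply p _ τ).trans (hux j hj).symm
  choose g hg using fun j hj => (hprin _ _ _ (hfib j hj)).exists
  have ha_inj : ∀ m x, Function.Injective (a m x) :=
    fun m x _ g h => (hprin m x _ (ha_over m x g).symm).unique h rfl
  obtain ⟨w, hw⟩ := SimplicialGroup.exists_horn_filler
    (SimplicialGroup.isHornCompatible_of_act_eq_horn_face a ha_map ha_inj u τ g hg)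
  exact ⟨a _ τ w, ha_over _ _ _, fun j hj => by rw [ha_map, hw, hg]⟩

/-- Let `G` be a simplicial group acting principally (over `X`) on a simplicial set `P`,
i.e. `P → X` is a `G`-torsor: the action is simplicial and over `X`, and the shear map
`P × G → P ×_X P` is an isomorphism (rendered: for any two simplices in the same fiber
there is a unique group element carrying one to the other).  If each `Pₙ → Xₙ` is
surjective, then `P → X` is a Kan fibration. -/
theorem torsor_isKanFibration
    (G : CategoryTheory.SimplicialObject GrpCat.{u}) (P X : SSet.{u}) (p : P ⟶ X)
    (a : ∀ m : SimplexCategoryᵒᵖ, P.obj m → ↑(G.obj m) → P.obj m)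
    -- action axioms
    (ha_one : ∀ m x, a m x 1 = x)
    (ha_mul : ∀ m x g h, a m (a m x g) h = a m x (g * h))
    -- the action is simplicial
    (ha_map : ∀ {m m'} (f : m ⟶ m') x g, P.map f (a m x g) = a m' (P.map f x) (G.map f g))
    -- the action is over `X`
    (ha_over : ∀ m x g, p.app m (a m x g) = p.app m x)
    -- principality: the shear map `P × G → P ×_X P` is an isomorphism
    (hprin : ∀ m (y z : P.obj m), p.app m y = p.app m z → ∃! g : ↑(G.obj m), a m y g = z)
    -- local triviality over sets: each `Pₙ → Xₙ` is onto
    (hsurj : ∀ m, Function.Surjective (p.app m)) :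
    ∀ (n : ℕ), 0 < n → ∀ (i : Fin (n + 1)), HasLiftingProperty (SSet.horn.{u} n i).ι p :=
  torsor_isKanFibration_general G P X p a ha_map ha_over hprin hsurj
end
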